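/- If g(t) solves the Ricci flow on a closed manifold and the scalar curvature satisfies R ≥ c at time 0 for some constant c, then R ≥ c for all later times; moreover if R(·,0) ≥ c > 0 then the flow cannot exist beyond time n/(2c), since the minimum of R satisfies R_min(t) ≥ 1/(R_min(0)⁻¹ - 2t/n). -/

import Mathlib

/-!
A first-time argument gives the maximum principle: if a quantity on `M × [0, T)` has nonnegative
time derivative wherever it attains its spatial minimum, a lower bound at time `0` persists
(tilt by `δ t` to make the derivative strictly positive, look at the first time the bound fails
at a spatial minimum, and read off a nonpositive one-sided derivative there). At a spatial minimum
of `R`, `∂R/∂t = ΔR + 2|Ric|² ≥ 2R²/n ≥ 0`, which gives `R ≥ c`. When `R > 0` the same inequality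
says `∂(-1/R - 2t/n)/∂t ≥ 0` at those minima, so `1/R ≤ R_min(0)⁻¹ - 2t/n`; the right side must
stay positive, which bounds the existence time by `n / (2c)`.
-/

open Set

theorem HasDerivAt.nonpos_of_isMinOn_Icc {g : ℝ → ℝ} {d a t : ℝ} (hg : HasDerivAt g d t)
    (hat : a < t) (hmin : IsMinOn g (Icc a t) t) : d ≤ 0 := by
  have hcone : a - t ∈ posTangentConeAt (Icc a t) t :=
    sub_mem_posTangentConeAt_of_segment_subset ((segment_symm ℝ t a).trans_subset
      (segment_eq_Icc hat.le).subset)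
  have h := hmin.localize.hasFDerivWithinAt_nonneg hg.hasDerivWithinAt.hasFDerivWithinAt hcone
  rw [ContinuousLinearMap.toSpanSingleton_apply, smul_eq_mul] at h
  exact nonpos_of_mul_nonneg_right h (sub_neg.mpr hat)

theorem exists_first_time_le {M : Type*} [TopologicalSpace M] [CompactSpace M]
    {G : M → ℝ → ℝ} {T a t₁ : ℝ} {x₁ : M}
    (hG : ContinuousOn (fun p : M × ℝ => G p.1 p.2) (univ ×ˢ Ico 0 T))
    (ht₁ : t₁ ∈ Ico 0 T) (hx₁ : G x₁ t₁ ≤ a) :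
    ∃ t₀ ∈ Icc 0 t₁, ∃ x₀, G x₀ t₀ ≤ a ∧ ∀ s ∈ Ico 0 t₀, ∀ x, a < G x s := by
  set C : Set (M × ℝ) := univ ×ˢ Icc 0 t₁ ∩ (fun p => G p.1 p.2) ⁻¹' Iic a
  have hsub : (univ : Set M) ×ˢ Icc 0 t₁ ⊆ univ ×ˢ Ico (0 : ℝ) T :=
    prod_mono subset_rfl (Icc_subset_Ico_right ht₁.2)
  have hC : IsCompact C :=
    (isCompact_univ.prod isCompact_Icc).of_isClosed_subset
      ((hG.mono hsub).preimage_isClosed_of_isClosed (isClosed_univ.prod isClosed_Icc)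
        isClosed_Iic) inter_subset_left
  obtain ⟨⟨x₀, t₀⟩, ⟨⟨-, ht₀⟩, hx₀⟩, hfirst⟩ :=
    hC.exists_isMinOn ⟨(x₁, t₁), ⟨mem_univ _, ht₁.1, le_rfl⟩, hx₁⟩ continuous_snd.continuousOn
  refine ⟨t₀, ht₀, x₀, hx₀, fun s hs x => lt_of_not_ge fun hxs => hs.2.not_ge ?_⟩
  exact hfirst (show (x, s) ∈ C from ⟨⟨mem_univ _, hs.1, hs.2.le.trans ht₀.2⟩, hxs⟩)

theorem lt_of_hasDerivAt_pos_at_min {M : Type*} [TopologicalSpace M] [CompactSpace M]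
    {G g : M → ℝ → ℝ} {T a : ℝ}
    (hG : ContinuousOn (fun p : M × ℝ => G p.1 p.2) (univ ×ˢ Ico 0 T))
    (hder : ∀ x, ∀ t ∈ Ico 0 T, HasDerivAt (G x) (g x t) t)
    (hmin : ∀ t ∈ Ico 0 T, ∀ x, (∀ y, G x t ≤ G y t) → 0 < g x t)
    (h0 : ∀ x, a < G x 0) : ∀ t ∈ Ico 0 T, ∀ x, a < G x t := by
  intro t₁ ht₁ x₁
  by_contra! hx₁
  obtain ⟨t₀, ht₀, x₀, hx₀, hbefore⟩ := exists_first_time_le hG ht₁ hx₁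
  have ht₀pos : 0 < t₀ := ht₀.1.lt_of_ne (by rintro rfl; linarith [h0 x₀])
  have ht₀T : t₀ ∈ Ico 0 T := ⟨ht₀.1, ht₀.2.trans_lt ht₁.2⟩
  have hcont : Continuous fun x => G x t₀ :=
    hG.comp_continuous (Continuous.prodMk_left t₀) fun _ => ⟨mem_univ _, ht₀T⟩
  have : Nonempty M := ⟨x₀⟩
  obtain ⟨z, -, hz⟩ := isCompact_univ.exists_isMinOn univ_nonempty hcont.continuousOn
  have hz : ∀ y, G z t₀ ≤ G y t₀ := fun y => hz (mem_univ y)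
  have hzt : IsMinOn (G z) (Icc 0 t₀) t₀ := by
    refine isMinOn_iff.mpr fun s hs => ?_
    rcases hs.2.lt_or_eq with hlt | rfl
    · exact ((hz x₀).trans hx₀ |>.trans (hbefore s ⟨hs.1, hlt⟩ z).le)
    · exact le_rfl
  linarith [hmin t₀ ht₀T z hz, (hder z t₀ ht₀T).nonpos_of_isMinOn_Icc ht₀pos hzt]

theorem le_of_hasDerivAt_nonneg_at_min {M : Type*} [TopologicalSpace M] [CompactSpace M]
    {F f : M → ℝ → ℝ} {T a : ℝ}
    (hF : ContinuousOn (fun p : M × ℝ => F p.1 p.2) (univ ×ˢ Ico 0 T))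
    (hder : ∀ x, ∀ t ∈ Ico 0 T, HasDerivAt (F x) (f x t) t)
    (hmin : ∀ t ∈ Ico 0 T, ∀ x, (∀ y, F x t ≤ F y t) → 0 ≤ f x t)
    (h0 : ∀ x, a ≤ F x 0) : ∀ t ∈ Ico 0 T, ∀ x, a ≤ F x t := by
  intro t ht x
  refine le_of_forall_pos_lt_add fun ε hε => ?_
  have h1t : 0 < 1 + t := by linarith [ht.1]
  set δ := ε / (1 + t)
  have hδ : 0 < δ := div_pos hε h1t
  have hstrict := lt_of_hasDerivAt_pos_at_min (G := fun x s => F x s + δ * s)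
    (g := fun x s => f x s + δ) (a := a - δ) (hF.add (by fun_prop))
    (fun x s hs => ((hder x s hs).add ((hasDerivAt_id s).const_mul δ)).congr_deriv (by ring))
    (fun s hs x hx => by linarith [hmin s hs x fun y => by linarith [hx y]])
    (fun x => by linarith [h0 x]) t ht x
  have hδε : δ * (1 + t) = ε := div_mul_cancel₀ ε h1t.ne'
  linarith

section RicciFlow

variable {M : Type*} {n : ℕ} {T : ℝ} {R lap ricSq : M → ℝ → ℝ}

theorem two_mul_sq_div_le_lap_add_two_mul_ricSq
    (hpinch : ∀ (x : M) (t : ℝ), (R x t) ^ 2 / n ≤ ricSq x t)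
    (hmax : ∀ t ∈ Ico (0:ℝ) T, ∀ x : M, (∀ y, R x t ≤ R y t) → 0 ≤ lap x t)
    {t : ℝ} (ht : t ∈ Ico 0 T) {x : M} (hx : ∀ y, R x t ≤ R y t) :
    2 * R x t ^ 2 / n ≤ lap x t + 2 * ricSq x t := by
  rw [mul_div_assoc]
  linarith [hmax t ht x hx, hpinch x t]

variable [TopologicalSpace M] [CompactSpace M]

theorem scalar_lower_bound_of_ricci_flow
    (hRcont : Continuous fun p : M × ℝ => R p.1 p.2)
    (hev : ∀ (x : M), ∀ t ∈ Ico (0:ℝ) T, HasDerivAt (R x) (lap x t + 2 * ricSq x t) t)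
    (hpinch : ∀ (x : M) (t : ℝ), (R x t) ^ 2 / n ≤ ricSq x t)
    (hmax : ∀ t ∈ Ico (0:ℝ) T, ∀ x : M, (∀ y, R x t ≤ R y t) → 0 ≤ lap x t)
    {a : ℝ} (h0 : ∀ x, a ≤ R x 0) : ∀ t ∈ Ico 0 T, ∀ x, a ≤ R x t :=
  le_of_hasDerivAt_nonneg_at_min hRcont.continuousOn hev
    (fun t ht x hx => (by positivity : 0 ≤ 2 * R x t ^ 2 / n).trans
      (two_mul_sq_div_le_lap_add_two_mul_ricSq hpinch hmax ht hx)) h0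

theorem inv_scalar_le_of_ricci_flow
    (hRcont : Continuous fun p : M × ℝ => R p.1 p.2)
    (hev : ∀ (x : M), ∀ t ∈ Ico (0:ℝ) T, HasDerivAt (R x) (lap x t + 2 * ricSq x t) t)
    (hpinch : ∀ (x : M) (t : ℝ), (R x t) ^ 2 / n ≤ ricSq x t)
    (hmax : ∀ t ∈ Ico (0:ℝ) T, ∀ x : M, (∀ y, R x t ≤ R y t) → 0 ≤ lap x t)
    {b : ℝ} (hb : 0 < b) (h0 : ∀ x, b ≤ R x 0) :
    ∀ t ∈ Ico 0 T, ∀ x, (R x t)⁻¹ ≤ b⁻¹ - 2 * t / n := by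
  have hpos : ∀ t ∈ Ico 0 T, ∀ x, 0 < R x t := fun t ht x =>
    hb.trans_le (scalar_lower_bound_of_ricci_flow hRcont hev hpinch hmax h0 t ht x)
  have hbar := le_of_hasDerivAt_nonneg_at_min (a := -b⁻¹)
    (F := fun x t => -(R x t)⁻¹ - 2 * t / n)
    (f := fun x t => (lap x t + 2 * ricSq x t) / R x t ^ 2 - 2 / n)
    ((hRcont.continuousOn.inv₀ fun p hp => (hpos p.2 hp.2 p.1).ne').neg.sub (by fun_prop))
    (fun x t ht => (((hev x t ht).inv (hpos t ht x).ne').neg.sub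
      (((hasDerivAt_id t).const_mul 2).div_const (n : ℝ))).congr_deriv (by ring))
    (fun t ht x hx => by
      have hxmin : ∀ y, R x t ≤ R y t := fun y =>
        (inv_le_inv₀ (hpos t ht y) (hpos t ht x)).mp (by linarith [hx y])
      have := two_mul_sq_div_le_lap_add_two_mul_ricSq hpinch hmax ht hxmin
      rw [sub_nonneg, le_div_iff₀ (pow_pos (hpos t ht x) 2)]
      linarith [show 2 / (n : ℝ) * R x t ^ 2 = 2 * R x t ^ 2 / n by ring])
    (fun x => by simpa using inv_anti₀ hb (h0 x))
  intro t ht x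
  linarith [hbar t ht x]

end RicciFlow

theorem scalar_curvature_lower_bound_under_ricci_flow_general
    (M : Type) [TopologicalSpace M] [CompactSpace M] [Nonempty M]
    (n : ℕ) (hn : 0 < n) (T : ℝ)
    (R lap ricSq : M → ℝ → ℝ)
    (hRcont : Continuous fun p : M × ℝ => R p.1 p.2)
    (hev : ∀ (x : M), ∀ t ∈ Set.Ico (0:ℝ) T,
      HasDerivAt (R x) (lap x t + 2 * ricSq x t) t)
    (hpinch : ∀ (x : M) (t : ℝ), (R x t) ^ 2 / n ≤ ricSq x t)
    (hmax : ∀ t ∈ Set.Ico (0:ℝ) T, ∀ x : M,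
      (∀ y, R x t ≤ R y t) → 0 ≤ lap x t)
    (c : ℝ) (h0 : ∀ x, c ≤ R x 0) :
    (∀ t ∈ Set.Ico (0:ℝ) T, ∀ x, c ≤ R x t) ∧
    (0 < c → T ≤ n / (2 * c)) ∧
    (0 < ⨅ x, R x 0 → ∀ t ∈ Set.Ico (0:ℝ) T,
      ((⨅ x, R x 0)⁻¹ - 2 * t / n)⁻¹ ≤ ⨅ x, R x t) := by
  have hlower := fun {a : ℝ} => scalar_lower_bound_of_ricci_flow (a := a) hRcont hev hpinch hmax
  have hinv := fun {b : ℝ} => inv_scalar_le_of_ricci_flow (b := b) hRcont hev hpinch hmax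
  refine ⟨hlower h0, fun hc => ?_, fun hm t ht => ?_⟩
  · by_contra! hTc
    have ht : (n / (2 * c) : ℝ) ∈ Ico 0 T := ⟨by positivity, hTc⟩
    obtain ⟨x⟩ := ‹Nonempty M›
    have hvanish : c⁻¹ - 2 * (n / (2 * c)) / n = 0 := by
      field_simp [(Nat.cast_pos.mpr hn).ne']
      ring
    linarith [hinv hc h0 _ ht x, inv_pos.mpr (hc.trans_le (hlower h0 _ ht x))]
  · have h0m : ∀ x, (⨅ x, R x 0) ≤ R x 0 :=
      ciInf_le (isCompact_range (hRcont.comp (Continuous.prodMk_left 0))).bddBelow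
    refine le_ciInf fun x => ?_
    have hRinv := inv_pos.mpr (hm.trans_le (hlower h0m t ht x))
    simpa using inv_anti₀ hRinv (hinv hm h0m t ht x)

/-- Lower bounds on scalar curvature persist under the Ricci flow on a closed
`n`-manifold, and positive scalar curvature forces finite-time extinction.
The flow on the closed manifold `M` is recorded through the scalar curvature
`R : M → ℝ → ℝ`, evolving by `∂R/∂t = ΔR + 2|Ric|²` (fields `lap` and `ricSq`),
together with `|Ric|² ≥ R²/n` and the maximum principle (the Laplacian is
nonnegative at a spatial minimum).  Conclusions: `R ≥ c` is preserved; if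
`R(·,0) ≥ c > 0` the flow cannot exist beyond time `n/(2c)`; and the spatial
minimum satisfies `R_min(t) ≥ (R_min(0)⁻¹ - 2t/n)⁻¹`. -/
theorem scalar_curvature_lower_bound_under_ricci_flow
    (M : Type) [TopologicalSpace M] [CompactSpace M] [Nonempty M]
    (n : ℕ) (hn : 0 < n) (T : ℝ) (hT : 0 < T)
    (R lap ricSq : M → ℝ → ℝ)
    (hRcont : Continuous fun p : M × ℝ => R p.1 p.2)
    (hev : ∀ (x : M), ∀ t ∈ Set.Ico (0:ℝ) T,
      HasDerivAt (R x) (lap x t + 2 * ricSq x t) t)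
    (hpinch : ∀ (x : M) (t : ℝ), (R x t) ^ 2 / n ≤ ricSq x t)
    (hmax : ∀ t ∈ Set.Ico (0:ℝ) T, ∀ x : M,
      (∀ y, R x t ≤ R y t) → 0 ≤ lap x t)
    (c : ℝ) (h0 : ∀ x, c ≤ R x 0) :
    (∀ t ∈ Set.Ico (0:ℝ) T, ∀ x, c ≤ R x t) ∧
    (0 < c → T ≤ n / (2 * c)) ∧
    (0 < ⨅ x, R x 0 → ∀ t ∈ Set.Ico (0:ℝ) T,
      ((⨅ x, R x 0)⁻¹ - 2 * t / n)⁻¹ ≤ ⨅ x, R x t) :=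
  scalar_curvature_lower_bound_under_ricci_flow_general M n hn T R lap ricSq hRcont hev hpinch hmax
    c h0
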